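/- For non-zero subspaces U and W of R^n, the maximum angle of W^⊥ with respect to U^⊥ equals the maximum angle of U with respect to W: ∠_M(W^⊥, U^⊥) = ∠_M(U, W). -/

import Mathlib

/-! In `ℝⁿ` with the standard inner product,
`∠_M(U,W) = max_{u ∈ U, u≠0} min_{w ∈ W, w≠0} ∠(u,w)` where
`∠(u,w) = arccos(⟪u,w⟫/(‖u‖‖w‖))`, and `Uᗮ` denotes the orthogonal complement. -/

/-- The angle `∠(u,V)` of a vector with a subspace. -/
noncomputable def angleToSub {n : ℕ} (u : EuclideanSpace ℝ (Fin n))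
    (V : Submodule ℝ (EuclideanSpace ℝ (Fin n))) : ℝ :=
  sInf {θ : ℝ | ∃ v ∈ V, v ≠ 0 ∧ θ = InnerProductGeometry.angle u v}

/-- The maximum angle `∠_M(U,V)`. -/
noncomputable def maxAngle {n : ℕ}
    (U V : Submodule ℝ (EuclideanSpace ℝ (Fin n))) : ℝ :=
  sSup {θ : ℝ | ∃ u ∈ U, u ≠ 0 ∧ θ = angleToSub u V}

/-! The angle from `u ≠ 0` to a subspace `V ≠ 0` is `arcsin (‖P_{Vᗮ} u‖ / ‖u‖)`, attained at the
projection of `u` onto `V`. For `w ∈ Wᗮ` its projection `p = P_U w` satisfies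
`‖p‖² = ⟪p, w⟫ = ⟪P_{Wᗮ} p, w⟫ ≤ ‖P_{Wᗮ} p‖ ‖w‖`, so the angle from `w` to `Uᗮ` is at most the
angle from `p ∈ U` to `W`. Hence `∠_M(Wᗮ, Uᗮ) ≤ ∠_M(U, W)`, and the same inequality for the pair
`Wᗮ, Uᗮ` gives the reverse. -/

open Real InnerProductGeometry RealInnerProductSpace

namespace Submodule

variable {E : Type*} [NormedAddCommGroup E] [InnerProductSpace ℝ E]
  (K : Submodule ℝ E) [K.HasOrthogonalProjection]

theorem inner_starProjection_left_of_mem (u : E) {v : E} (hv : v ∈ K) :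
    ⟪K.starProjection u, v⟫ = ⟪u, v⟫ := by
  rw [K.inner_starProjection_left_eq_right, K.starProjection_eq_self_iff.mpr hv]

theorem inner_starProjection_right_self (u : E) :
    ⟪u, K.starProjection u⟫ = ‖K.starProjection u‖ ^ 2 := by
  rw [← K.inner_starProjection_left_of_mem u (K.starProjection_apply_mem u),
    real_inner_self_eq_norm_sq]

theorem isLeast_angle {u : E} (hu : u ≠ 0) (hK : K ≠ ⊥) :
    IsLeast {θ | ∃ v ∈ K, v ≠ 0 ∧ θ = angle u v} (arccos (‖K.starProjection u‖ / ‖u‖)) := by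
  refine ⟨?_, ?_⟩
  · by_cases hp : K.starProjection u = 0
    · obtain ⟨v, hv, hv0⟩ := K.exists_mem_ne_zero_of_ne_bot hK
      refine ⟨v, hv, hv0, ?_⟩
      rw [angle, ← K.inner_starProjection_left_of_mem u hv, hp]
      simp
    · refine ⟨_, K.starProjection_apply_mem u, hp, ?_⟩
      have : ‖K.starProjection u‖ ≠ 0 := norm_ne_zero_iff.mpr hp
      rw [angle, inner_starProjection_right_self]
      field_simp
  · rintro _ ⟨v, hv, hv0, rfl⟩
    refine arccos_le_arccos ?_
    have hu' : 0 < ‖u‖ := norm_pos_iff.mpr hu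
    have hv' : 0 < ‖v‖ := norm_pos_iff.mpr hv0
    rw [← K.inner_starProjection_left_of_mem u hv, div_le_div_iff₀ (by positivity) hu']
    calc ⟪K.starProjection u, v⟫ * ‖u‖ ≤ ‖K.starProjection u‖ * ‖v‖ * ‖u‖ := by
          gcongr; exact real_inner_le_norm _ _
      _ = ‖K.starProjection u‖ * (‖u‖ * ‖v‖) := by ring

theorem arccos_norm_starProjection_div_norm {u : E} (hu : u ≠ 0) :
    arccos (‖K.starProjection u‖ / ‖u‖) = arcsin (‖Kᗮ.starProjection u‖ / ‖u‖) := by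
  have hu' : ‖u‖ ≠ 0 := norm_ne_zero_iff.mpr hu
  rw [arccos_eq_arcsin (by positivity), ← sqrt_sq (by positivity : 0 ≤ ‖Kᗮ.starProjection u‖ / ‖u‖)]
  congr 2
  field_simp
  linarith [K.norm_sq_eq_add_norm_sq_starProjection u]

theorem sq_norm_starProjection_le (L : Submodule ℝ E) [L.HasOrthogonalProjection] {w : E}
    (hw : w ∈ L) :
    ‖K.starProjection w‖ ^ 2 ≤ ‖L.starProjection (K.starProjection w)‖ * ‖w‖ :=
  calc ‖K.starProjection w‖ ^ 2 = ⟪K.starProjection w, w⟫ := by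
        rw [real_inner_comm, inner_starProjection_right_self]
    _ = ⟪L.starProjection (K.starProjection w), w⟫ :=
        (L.inner_starProjection_left_of_mem _ hw).symm
    _ ≤ ‖L.starProjection (K.starProjection w)‖ * ‖w‖ := real_inner_le_norm _ _

end Submodule

section

variable {n : ℕ}

theorem angleToSub_eq_arcsin {u : EuclideanSpace ℝ (Fin n)}
    {V : Submodule ℝ (EuclideanSpace ℝ (Fin n))} (hu : u ≠ 0) (hV : V ≠ ⊥) :
    angleToSub u V = arcsin (‖Vᗮ.starProjection u‖ / ‖u‖) := by
  rw [angleToSub, (V.isLeast_angle hu hV).csInf_eq, V.arccos_norm_starProjection_div_norm hu]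

theorem angleToSub_nonneg (u : EuclideanSpace ℝ (Fin n))
    (V : Submodule ℝ (EuclideanSpace ℝ (Fin n))) : 0 ≤ angleToSub u V :=
  Real.sInf_nonneg <| by rintro _ ⟨v, -, -, rfl⟩; exact angle_nonneg _ _

theorem maxAngle_nonneg (U V : Submodule ℝ (EuclideanSpace ℝ (Fin n))) : 0 ≤ maxAngle U V :=
  Real.sSup_nonneg <| by rintro _ ⟨u, -, -, rfl⟩; exact angleToSub_nonneg _ _

theorem angleToSub_le_maxAngle {U V : Submodule ℝ (EuclideanSpace ℝ (Fin n))}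
    {u : EuclideanSpace ℝ (Fin n)} (hV : V ≠ ⊥) (hu : u ∈ U) (hu0 : u ≠ 0) :
    angleToSub u V ≤ maxAngle U V := by
  refine le_csSup ⟨π / 2, ?_⟩ ⟨u, hu, hu0, rfl⟩
  rintro _ ⟨u', -, hu'0, rfl⟩
  rw [angleToSub_eq_arcsin hu'0 hV]
  exact arcsin_le_pi_div_two _

theorem maxAngle_orthogonal_le {U W : Submodule ℝ (EuclideanSpace ℝ (Fin n))}
    (hU : U ≠ ⊤) (hW : W ≠ ⊥) : maxAngle Wᗮ Uᗮ ≤ maxAngle U W := by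
  refine Real.sSup_le ?_ (maxAngle_nonneg U W)
  rintro _ ⟨w, hw, hw0, rfl⟩
  rw [angleToSub_eq_arcsin hw0 (by rwa [Ne, Submodule.orthogonal_eq_bot_iff])]
  simp only [Submodule.orthogonal_orthogonal]
  set p := U.starProjection w
  by_cases hp : p = 0
  · rw [hp, norm_zero, zero_div, arcsin_zero]
    exact maxAngle_nonneg U W
  have hp' : 0 < ‖p‖ := norm_pos_iff.mpr hp
  have hw' : 0 < ‖w‖ := norm_pos_iff.mpr hw0
  calc arcsin (‖p‖ / ‖w‖) ≤ arcsin (‖Wᗮ.starProjection p‖ / ‖p‖) := by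
        refine arcsin_le_arcsin ?_
        rw [div_le_div_iff₀ hw' hp', ← sq]
        exact U.sq_norm_starProjection_le Wᗮ hw
    _ = angleToSub p W := (angleToSub_eq_arcsin hp hW).symm
    _ ≤ maxAngle U W := angleToSub_le_maxAngle hW (U.starProjection_apply_mem w) hp

end

theorem maxAngle_orthogonal_general {n : ℕ}
    (U W : Submodule ℝ (EuclideanSpace ℝ (Fin n)))
    (hW : W ≠ ⊥) (hU' : U ≠ ⊤) :
    maxAngle Wᗮ Uᗮ = maxAngle U W := by
  refine le_antisymm (maxAngle_orthogonal_le hU' hW) ?_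
  have h := maxAngle_orthogonal_le (U := Wᗮ) (W := Uᗮ)
    (by rwa [Ne, Submodule.orthogonal_eq_top_iff]) (by rwa [Ne, Submodule.orthogonal_eq_bot_iff])
  rwa [Submodule.orthogonal_orthogonal, Submodule.orthogonal_orthogonal] at h

/-- For non-zero subspaces `U` and `W` of `ℝⁿ` (so that all four angles
are between genuinely non-zero subspaces, we also require the orthogonal complements
to be non-zero, i.e. `U, W ≠ ℝⁿ`), the maximum angle of `W^⊥` with respect to `U^⊥`
equals the maximum angle of `U` with respect to `W`: `∠_M(W^⊥, U^⊥) = ∠_M(U, W)`. -/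
theorem maxAngle_orthogonal {n : ℕ}
    (U W : Submodule ℝ (EuclideanSpace ℝ (Fin n)))
    (hU : U ≠ ⊥) (hW : W ≠ ⊥) (hU' : U ≠ ⊤) (hW' : W ≠ ⊤) :
    maxAngle Wᗮ Uᗮ = maxAngle U W :=
  maxAngle_orthogonal_general U W hW hU'
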